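/- arXiv:1607.00099 — 5 statements merged into one kernel-verified Lean document; each statement's English description precedes it below -/
import Mathlib

section
/- For any ideal A of a semiring R, the congruence κ_A equals the congruence κ_{\bar{A}}, where \bar{A} is the k-closure of A. -/
variable {R : Type*} [AddCommSemigroup R] [Semigroup R]

/-- `A` is an ideal of the semiring `R`. -/
def IsIdeal (A : Set R) : Prop :=
  A.Nonempty ∧ (∀ ⦃a b : R⦄, a ∈ A → b ∈ A → a + b ∈ A) ∧
    (∀ ⦃a : R⦄, a ∈ A → ∀ r : R, r * a ∈ A ∧ a * r ∈ A)

/-- The k-closure (subtractive closure) of `A`. -/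
def kClosure (A : Set R) : Set R := {x : R | ∃ a ∈ A, ∃ b ∈ A, x + a = b}

/-- `A` is a k-ideal (subtractive ideal) of `R`. -/
def IsKIdeal (A : Set R) : Prop := IsIdeal A ∧ kClosure A ⊆ A

/-- `θ` is a congruence on the semiring `R`. -/
def IsCongruence (θ : R → R → Prop) : Prop :=
  Equivalence θ ∧
    ∀ ⦃a b : R⦄, θ a b → ∀ c : R, θ (a + c) (b + c) ∧ θ (a * c) (b * c) ∧ θ (c * a) (c * b)

/-- The relation `κ_A` induced by a subset `A`. -/
def kappa (A : Set R) : R → R → Prop := fun x y => ∃ a ∈ A, ∃ b ∈ A, x + a = y + b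

/-- The class of `z` is the zero of the quotient semiring `R/θ`. -/
def IsZeroClass (θ : R → R → Prop) (z : R) : Prop :=
  (∀ x : R, θ (x + z) x) ∧ (∀ x : R, θ (x * z) z) ∧ (∀ x : R, θ (z * x) z)

/-- The congruence class of `z` under `θ`, viewed as a subset of `R`. -/
def classOf (θ : R → R → Prop) (z : R) : Set R := {x : R | θ x z}

/-- `θ` is a k-congruence on `R`. -/
def IsKCongruence (θ : R → R → Prop) : Prop := ∃ A : Set R, IsIdeal A ∧ θ = kappa A

/-- `z` is a zero of the semiring `R`. -/
def IsZero (z : R) : Prop := (∀ x : R, x + z = x) ∧ ∀ x : R, x * z = z ∧ z * x = z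

/-- For any ideal A, the congruence κ_A equals κ applied to the k-closure of A. -/
theorem stmt_3 (hL : ∀ a b c : R, a * (b + c) = a * b + a * c)
    (hR : ∀ a b c : R, (a + b) * c = a * c + b * c)
    (A : Set R) (hA : IsIdeal A) :
    kappa A = kappa (kClosure A) := by
  have hsub : A ⊆ kClosure A := fun x hx => ⟨x, hx, x + x, hA.2.1 hx hx, rfl⟩
  funext x y
  ext
  constructor
  · rintro ⟨a, ha, b, hb, h⟩
    exact ⟨a, hsub ha, b, hsub hb, h⟩
  · rintro ⟨a, ⟨a', ha', a'', ha'', haeq⟩, b, ⟨b', hb', b'', hb'', hbeq⟩, h⟩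
    refine ⟨a'' + b', hA.2.1 ha'' hb', b'' + a', hA.2.1 hb'' ha', ?_⟩
    calc x + (a'' + b') = (x + a) + (a' + b') := by rw [← haeq]; ac_rfl
      _ = (y + b) + (a' + b') := by rw [h]
      _ = (y + a') + (b + b') := by ac_rfl
      _ = y + (b'' + a') := by rw [hbeq]; ac_rfl
end

section
/- Let θ be a congruence on a semiring R. The following are equivalent: (1) θ = κ_A for some ideal A of R (i.e., θ is a k-congruence); (2) R/θ has a zero 0_θ and θ ⊆ κ_{0_θ}; (3) R/θ has a zero 0_θ and θ = κ_{0_θ}. -/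
variable {R : Type*} [AddCommSemigroup R] [Semigroup R]

/-- Criteria for k-congruences: for a congruence θ on R, TFAE:
(1) θ is a k-congruence; (2) R/θ has a zero class and θ ⊆ κ_{0_θ};
(3) R/θ has a zero class and θ = κ_{0_θ}. -/
theorem stmt_4 (hL : ∀ a b c : R, a * (b + c) = a * b + a * c)
    (hR : ∀ a b c : R, (a + b) * c = a * c + b * c)
    (θ : R → R → Prop) (hθ : IsCongruence θ) :
    (IsKCongruence θ ↔
      ∃ z : R, IsZeroClass θ z ∧ ∀ x y : R, θ x y → kappa (classOf θ z) x y) ∧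
    (IsKCongruence θ ↔ ∃ z : R, IsZeroClass θ z ∧ θ = kappa (classOf θ z)) := by
  obtain ⟨heq, hcomp⟩ := hθ
  -- κ_{classOf θ z} ⊆ θ whenever z is a zero class
  have kap_sub : ∀ z : R, (∀ x : R, θ (x + z) x) →
      ∀ x y : R, kappa (classOf θ z) x y → θ x y := by
    rintro z hz x y ⟨a, ha, b, hb, hxy⟩
    have t1 : θ (x + a) (x + z) := by
      have := (hcomp ha x).1
      rwa [add_comm a x, add_comm z x] at this
    have t2 : θ (y + b) (y + z) := by
      have := (hcomp hb y).1
      rwa [add_comm b y, add_comm z y] at this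
    have txa : θ (x + a) x := heq.trans t1 (hz x)
    have tyb : θ (y + b) y := heq.trans t2 (hz y)
    exact heq.trans (heq.symm txa) (hxy ▸ tyb)
  -- the zero class is an ideal
  have zc_ideal : ∀ z : R, IsZeroClass θ z → IsIdeal (classOf θ z) := by
    rintro z ⟨hz1, hz2, hz3⟩
    refine ⟨⟨z, heq.refl z⟩, ?_, ?_⟩
    · intro a b ha hb
      have t1 : θ (a + b) (z + b) := (hcomp ha b).1
      have t2 : θ (z + b) (z + z) := by
        have := (hcomp hb z).1
        rwa [add_comm b z, add_comm z z] at this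
      exact heq.trans t1 (heq.trans t2 (hz1 z))
    · intro a ha r
      constructor
      · exact heq.trans (hcomp ha r).2.2 (hz2 r)
      · exact heq.trans (hcomp ha r).2.1 (hz3 r)
  -- (1) → (2)
  have h12 : IsKCongruence θ →
      ∃ z : R, IsZeroClass θ z ∧ ∀ x y : R, θ x y → kappa (classOf θ z) x y := by
    rintro ⟨A, ⟨⟨z, hzA⟩, hadd, hmul⟩, rfl⟩
    have hzc : IsZeroClass (kappa A) z := by
      refine ⟨?_, ?_, ?_⟩
      · intro x
        exact ⟨z, hzA, z + z, hadd hzA hzA, add_assoc x z z⟩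
      · intro x
        exact ⟨z, hzA, x * z, (hmul hzA x).1, add_comm (x * z) z⟩
      · intro x
        exact ⟨z, hzA, z * x, (hmul hzA x).2, add_comm (z * x) z⟩
    have hsubA : A ⊆ classOf (kappa A) z := by
      intro a ha
      exact ⟨z, hzA, a, ha, add_comm a z⟩
    exact ⟨z, hzc, fun x y ⟨a, ha, b, hb, hab⟩ =>
      ⟨a, hsubA ha, b, hsubA hb, hab⟩⟩
  -- (2) → (3)
  have h23 : (∃ z : R, IsZeroClass θ z ∧ ∀ x y : R, θ x y → kappa (classOf θ z) x y) →
      ∃ z : R, IsZeroClass θ z ∧ θ = kappa (classOf θ z) := by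
    rintro ⟨z, hzc, hsub⟩
    refine ⟨z, hzc, ?_⟩
    funext x y
    exact propext ⟨hsub x y, kap_sub z hzc.1 x y⟩
  -- (3) → (1)
  have h31 : (∃ z : R, IsZeroClass θ z ∧ θ = kappa (classOf θ z)) → IsKCongruence θ := by
    rintro ⟨z, hzc, hEq⟩
    exact ⟨classOf θ z, zc_ideal z hzc, hEq⟩
  constructor
  · exact ⟨h12, fun h => h31 (h23 h)⟩
  · exact ⟨fun h => h23 (h12 h), h31⟩
end

section
/- If θ is a k-congruence on a semiring R (i.e., θ = κ_A for some ideal A), then κ applied to the zero class of R/θ recovers θ; that is, κ_{0_θ} = θ. -/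
variable {R : Type*} [AddCommSemigroup R] [Semigroup R]

/-- If θ is a k-congruence on R, then κ applied to the zero class of R/θ
recovers θ. -/
theorem stmt_5 (hL : ∀ a b c : R, a * (b + c) = a * b + a * c)
    (hR : ∀ a b c : R, (a + b) * c = a * c + b * c)
    (θ : R → R → Prop) (hθ : IsKCongruence θ) (z : R) (hz : IsZeroClass θ z) :
    kappa (classOf θ z) = θ := by
  obtain ⟨A, hA, rfl⟩ := hθ
  funext x y
  apply propext
  constructor
  · rintro ⟨c, hc, d, hd, hxy⟩
    obtain ⟨a1, ha1, b1, hb1, h1⟩ := hc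
    obtain ⟨a2, ha2, b2, hb2, h2⟩ := hd
    obtain ⟨p, hp, q, hq, h3⟩ := hz.1 x
    obtain ⟨r, hr, s, hs, h4⟩ := hz.1 y
    refine ⟨q + b1 + a2 + r, hA.2.1 (hA.2.1 (hA.2.1 hq hb1) ha2) hr,
      s + b2 + a1 + p, hA.2.1 (hA.2.1 (hA.2.1 hs hb2) ha1) hp, ?_⟩
    calc x + (q + b1 + a2 + r)
        = (x + q) + (b1 + (a2 + r)) := by ac_rfl
      _ = (x + z + p) + (b1 + (a2 + r)) := by rw [← h3]
      _ = (x + (z + b1)) + (a2 + (p + r)) := by ac_rfl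
      _ = (x + (c + a1)) + (a2 + (p + r)) := by rw [← h1]
      _ = (x + c) + (a1 + (a2 + (p + r))) := by ac_rfl
      _ = (y + d) + (a1 + (a2 + (p + r))) := by rw [hxy]
      _ = (y + (d + a2)) + (a1 + (p + r)) := by ac_rfl
      _ = (y + (z + b2)) + (a1 + (p + r)) := by rw [h2]
      _ = (y + z + r) + (b2 + (a1 + p)) := by ac_rfl
      _ = (y + s) + (b2 + (a1 + p)) := by rw [h4]
      _ = y + (s + b2 + a1 + p) := by ac_rfl
  · rintro ⟨a, ha, b, hb, hab⟩
    obtain ⟨p, hp, q, hq, h⟩ := hz.1 a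
    obtain ⟨p', hp', q', hq', h'⟩ := hz.1 b
    refine ⟨a, ⟨q, hq, a + p, hA.2.1 ha hp, ?_⟩, b, ⟨q', hq', b + p', hA.2.1 hb hp', ?_⟩, hab⟩
    · rw [← h]; ac_rfl
    · rw [← h']; ac_rfl
end

section
/- The map A ↦ κ_A restricted to the family of k-ideals of a semiring R is an inclusion-preserving bijection from the set of k-ideals of R onto the set of k-congruences on R, with inverse θ ↦ 0_θ (the zero class of R/θ). -/
variable {R : Type*} [AddCommSemigroup R] [Semigroup R]

theorem subset_kClosure (A : Set R) (hA : IsIdeal A) : A ⊆ kClosure A := by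
  intro x hx
  exact ⟨x, hx, x + x, hA.2.1 hx hx, rfl⟩

theorem kClosure_isKIdeal (A : Set R)
    (hL : ∀ a b c : R, a * (b + c) = a * b + a * c)
    (hR : ∀ a b c : R, (a + b) * c = a * c + b * c)
    (hA : IsIdeal A) : IsKIdeal (kClosure A) := by
  obtain ⟨hne, hadd, hmul⟩ := hA
  refine ⟨⟨hne.imp fun a ha => subset_kClosure A ⟨hne, hadd, hmul⟩ ha, ?_, ?_⟩, ?_⟩
  · rintro x y ⟨a₁, ha₁, b₁, hb₁, e₁⟩ ⟨a₂, ha₂, b₂, hb₂, e₂⟩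
    refine ⟨a₁ + a₂, hadd ha₁ ha₂, b₁ + b₂, hadd hb₁ hb₂, ?_⟩
    calc x + y + (a₁ + a₂) = (x + a₁) + (y + a₂) := by ac_rfl
    _ = b₁ + b₂ := by rw [e₁, e₂]
  · rintro x ⟨a, ha, b, hb, e⟩ r
    constructor
    · exact ⟨r * a, (hmul ha r).1, r * b, (hmul hb r).1, by rw [← hL, e]⟩
    · exact ⟨a * r, (hmul ha r).2, b * r, (hmul hb r).2, by rw [← hR, e]⟩
  · rintro x ⟨u, ⟨a₁, ha₁, b₁, hb₁, e₁⟩, v, ⟨a₂, ha₂, b₂, hb₂, e₂⟩, e⟩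
    refine ⟨b₁ + a₂, hadd hb₁ ha₂, b₂ + a₁, hadd hb₂ ha₁, ?_⟩
    calc x + (b₁ + a₂) = (x + (u + a₁)) + a₂ := by rw [e₁, add_assoc]
    _ = (x + u) + (a₁ + a₂) := by ac_rfl
    _ = v + a₂ + a₁ := by rw [e]; ac_rfl
    _ = b₂ + a₁ := by rw [e₂]

theorem kappa_kClosure (A : Set R) (hA : IsIdeal A) :
    kappa (kClosure A) = kappa A := by
  funext x y
  ext
  constructor
  · rintro ⟨u, ⟨a₁, ha₁, b₁, hb₁, e₁⟩, v, ⟨a₂, ha₂, b₂, hb₂, e₂⟩, e⟩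
    refine ⟨b₁ + a₂, hA.2.1 hb₁ ha₂, b₂ + a₁, hA.2.1 hb₂ ha₁, ?_⟩
    calc x + (b₁ + a₂) = (x + (u + a₁)) + a₂ := by rw [e₁, add_assoc]
    _ = (x + u) + (a₁ + a₂) := by ac_rfl
    _ = (y + v) + (a₂ + a₁) := by rw [e]; ac_rfl
    _ = (y + (v + a₂)) + a₁ := by ac_rfl
    _ = y + (b₂ + a₁) := by rw [e₂]; ac_rfl
  · rintro ⟨a, ha, b, hb, e⟩
    exact ⟨a, subset_kClosure A hA ha, b, subset_kClosure A hA hb, e⟩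

theorem kIdeal_subset_of_kappa_eq {A B : Set R} (hA : IsKIdeal A) (hB : IsKIdeal B)
    (h : kappa A = kappa B) : A ⊆ B := by
  intro x hx
  obtain ⟨b₀, hb₀⟩ := hB.1.1
  have h1 : kappa A (x + b₀) b₀ := ⟨x, hx, x + x, hA.1.2.1 hx hx, by ac_rfl⟩
  rw [h] at h1
  obtain ⟨b₁, hb₁, b₂, hb₂, e⟩ := h1
  refine hB.2 ⟨b₀ + b₁, hB.1.2.1 hb₀ hb₁, b₀ + b₂, hB.1.2.1 hb₀ hb₂, ?_⟩
  calc x + (b₀ + b₁) = x + b₀ + b₁ := by ac_rfl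
  _ = b₀ + b₂ := e

/-- The map A ↦ κ_A is an inclusion-preserving bijection from the k-ideals of R
onto the k-congruences on R, with inverse θ ↦ 0_θ. -/
theorem stmt_7 (hL : ∀ a b c : R, a * (b + c) = a * b + a * c)
    (hR : ∀ a b c : R, (a + b) * c = a * c + b * c) :
    (∀ A B : Set R, IsKIdeal A → IsKIdeal B → A ⊆ B →
        ∀ x y : R, kappa A x y → kappa B x y) ∧
    (∀ A : Set R, IsKIdeal A → IsKCongruence (kappa A)) ∧
    (∀ A B : Set R, IsKIdeal A → IsKIdeal B → kappa A = kappa B → A = B) ∧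
    (∀ θ : R → R → Prop, IsKCongruence θ → ∃ A : Set R, IsKIdeal A ∧ kappa A = θ) ∧
    (∀ A : Set R, IsKIdeal A → ∀ z : R, IsZeroClass (kappa A) z →
        classOf (kappa A) z = A) := by
  refine ⟨?_, ?_, ?_, ?_, ?_⟩
  · rintro A B hA hB hAB x y ⟨a, ha, b, hb, e⟩
    exact ⟨a, hAB ha, b, hAB hb, e⟩
  · rintro A hA
    exact ⟨A, hA.1, rfl⟩
  · rintro A B hA hB h
    exact Set.Subset.antisymm (kIdeal_subset_of_kappa_eq hA hB h)
      (kIdeal_subset_of_kappa_eq hB hA h.symm)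
  · rintro θ ⟨A, hA, rfl⟩
    exact ⟨kClosure A, kClosure_isKIdeal A hL hR hA, kappa_kClosure A hA⟩
  · rintro A hA z ⟨hz1, hz2, hz3⟩
    have hzA : z ∈ A := by
      obtain ⟨a₀, ha₀⟩ := hA.1.1
      obtain ⟨a, ha, b, hb, e⟩ := hz1 a₀
      refine hA.2 ⟨a₀ + a, hA.1.2.1 ha₀ ha, a₀ + b, hA.1.2.1 ha₀ hb, ?_⟩
      calc z + (a₀ + a) = a₀ + z + a := by ac_rfl
      _ = a₀ + b := e
    ext x
    constructor
    · rintro ⟨a, ha, b, hb, e⟩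
      exact hA.2 ⟨a, ha, z + b, hA.1.2.1 hzA hb, e⟩
    · intro hx
      exact ⟨z, hzA, x, hx, add_comm x z⟩
end

section
/- Let R be an incline and r ∈ R an element that is neither maximal nor minimal in the canonical order. Then the principal down-set A = {x ∈ R : x ≤ r} is a k-ideal of R with A ≠ R, and A ≠ {0} when R has a zero. Consequently, any incline with at least 3 elements is not k-simple. -/
variable {R : Type*} [AddCommSemigroup R] [Semigroup R]

lemma downset_kideal (hidem : ∀ r : R, r + r = r)
    (hinc1 : ∀ x y : R, x + x * y = x) (hinc2 : ∀ x y : R, x + y * x = x)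
    (r : R) : IsKIdeal {x : R | x + r = r} := by
  refine ⟨⟨⟨r, hidem r⟩, ?_, ?_⟩, ?_⟩
  · intro a b ha hb
    simp only [Set.mem_setOf_eq] at *
    rw [add_assoc, hb, ha]
  · intro a ha r'
    simp only [Set.mem_setOf_eq] at *
    constructor
    · calc r' * a + r = r' * a + (a + r) := by rw [ha]
        _ = (a + r' * a) + r := by rw [← add_assoc, add_comm (r' * a) a]
        _ = r := by rw [hinc2, ha]
    · calc a * r' + r = a * r' + (a + r) := by rw [ha]
        _ = (a + a * r') + r := by rw [← add_assoc, add_comm (a * r') a]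
        _ = r := by rw [hinc1, ha]
  · rintro x ⟨a, ha, b, hb, hab⟩
    simp only [Set.mem_setOf_eq] at *
    calc x + r = x + (a + r) := by rw [ha]
      _ = b + r := by rw [← add_assoc, hab]
      _ = r := hb

lemma downset_nontrivial (hidem : ∀ r : R, r + r = r) {r : R}
    (hmax : ∃ x : R, x + r ≠ r) (hz : ∀ z : R, IsZero z → r ≠ z) :
    {x : R | x + r = r} ≠ Set.univ ∧
      ¬ ∃ z : R, IsZero z ∧ {x : R | x + r = r} = {z} := by
  constructor
  · intro h
    obtain ⟨x, hx⟩ := hmax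
    exact hx (Set.eq_univ_iff_forall.mp h x)
  · rintro ⟨z, hz', hA⟩
    have : r ∈ ({z} : Set R) := hA ▸ (hidem r)
    exact hz z hz' this

/-- In an incline, the down-set of an element that is neither maximal nor
minimal is a nontrivial k-ideal; hence an incline with at least 3 elements is
not k-simple. -/
theorem stmt_17 (hL : ∀ a b c : R, a * (b + c) = a * b + a * c)
    (hR : ∀ a b c : R, (a + b) * c = a * c + b * c)
    (hidem : ∀ r : R, r + r = r)
    (hinc1 : ∀ x y : R, x + x * y = x) (hinc2 : ∀ x y : R, x + y * x = x) :
    (∀ r : R, (∃ s : R, r + s = s ∧ s ≠ r) → (∃ t : R, t + r = r ∧ t ≠ r) →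
      IsKIdeal {x : R | x + r = r} ∧ {x : R | x + r = r} ≠ Set.univ ∧
        ∀ z : R, IsZero z → {x : R | x + r = r} ≠ {z}) ∧
    ((∃ a b c : R, a ≠ b ∧ a ≠ c ∧ b ≠ c) →
      ¬ ∀ A : Set R, IsKIdeal A → A = Set.univ ∨ ∃ z : R, IsZero z ∧ A = {z}) := by
  constructor
  · rintro r ⟨s, hs, hsne⟩ ⟨t, ht, htne⟩
    refine ⟨downset_kideal hidem hinc1 hinc2 r, ?_, ?_⟩
    · intro h
      have : s + r = r := Set.eq_univ_iff_forall.mp h s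
      exact hsne (by rw [← hs, add_comm, this])
    · intro z hz h
      have hr : r ∈ ({z} : Set R) := h ▸ hidem r
      have ht' : t ∈ ({z} : Set R) := h ▸ ht
      exact htne (ht'.trans hr.symm)
  · rintro ⟨a, b, c, hab, hac, hbc⟩ hsimple
    -- a "maximum" element is unique; a zero is unique; so one of a,b,c is neither
    have key : ∀ r : R, (∃ x : R, x + r ≠ r) → (∀ z : R, IsZero z → r ≠ z) → False := by
      intro r hmax hz
      obtain ⟨h1, h2⟩ := downset_nontrivial hidem hmax hz
      rcases hsimple _ (downset_kideal hidem hinc1 hinc2 r) with h | ⟨z, hz', hA⟩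
      · exact h1 h
      · exact h2 ⟨z, hz', hA⟩
    -- uniqueness of maximum
    have umax : ∀ u v : R, (∀ x : R, x + u = u) → (∀ x : R, x + v = v) → u = v := by
      intro u v hu hv
      rw [← hv u, add_comm, hu v]
    have uzero : ∀ u v : R, IsZero u → IsZero v → u = v := by
      intro u v hu hv
      rw [← hv.1 u, add_comm, hu.1 v]
    -- for each r, either r is a maximum or r is a zero
    have alt : ∀ r : R, (∀ x : R, x + r = r) ∨ ∃ z : R, IsZero z ∧ r = z := by
      intro r
      by_cases hm : ∀ x : R, x + r = r
      · exact Or.inl hm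
      · push_neg at hm
        right
        by_contra hz
        push_neg at hz
        exact key r hm (fun z h he => hz z h he)
    rcases alt a with ha | ⟨za, hza, ha⟩
    · rcases alt b with hb | ⟨zb, hzb, hb⟩
      · exact hab (umax a b ha hb)
      · rcases alt c with hc | ⟨zc, hzc, hc⟩
        · exact hac (umax a c ha hc)
        · exact hbc (hb.trans ((uzero zb zc hzb hzc).trans hc.symm))
    · rcases alt b with hb | ⟨zb, hzb, hb⟩
      · rcases alt c with hc | ⟨zc, hzc, hc⟩
        · exact hbc (umax b c hb hc)
        · exact hac (ha.trans ((uzero za zc hza hzc).trans hc.symm))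
      · exact hab (ha.trans ((uzero za zb hza hzb).trans hb.symm))
end
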